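/- If an additive subgroup G of ℝ² has the property that every element (η, κ) of G satisfies η ≥ -(1/(2β))·log(1 + exp κ) for a fixed β > 0, then G is contained in a one-dimensional linear subspace of ℝ². -/
import Mathlib

theorem stmt_0 (β : ℝ) (hβ : 0 < β) (G : AddSubgroup (ℝ × ℝ))
    (hG : ∀ p ∈ G, p.1 ≥ -(1/(2*β)) * Real.log (1 + Real.exp p.2)) :
    ∃ v : ℝ × ℝ, v ≠ 0 ∧ ∀ p ∈ G, ∃ t : ℝ, p = t • v := by
  set C : ℝ := 1/(2*β) with hCdef
  have hC : 0 < C := by positivity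
  have hlog : ∀ x : ℝ, Real.log (1 + Real.exp x) ≤ Real.log 2 + max x 0 := by
    intro x
    have e1 : Real.exp x ≤ Real.exp (max x 0) := Real.exp_le_exp.2 (le_max_left _ _)
    have e2 : (1:ℝ) ≤ Real.exp (max x 0) := by
      rw [show (1:ℝ) = Real.exp 0 from (Real.exp_zero).symm]
      exact Real.exp_le_exp.2 (le_max_right _ _)
    have h1 : (1:ℝ) + Real.exp x ≤ 2 * Real.exp (max x 0) := by nlinarith
    calc Real.log (1 + Real.exp x) ≤ Real.log (2 * Real.exp (max x 0)) :=
          Real.log_le_log (by positivity) h1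
      _ = Real.log 2 + max x 0 := by
          rw [Real.log_mul (by norm_num) (Real.exp_pos _).ne', Real.log_exp]
  have hlog2 : (0:ℝ) ≤ Real.log 2 := Real.log_nonneg (by norm_num)
  -- one-sided asymptotic bound
  have hside : ∀ p ∈ G, -(C * max p.2 0) ≤ p.1 := by
    intro p hp
    by_contra h
    push_neg at h
    have hd : 0 < -(C * max p.2 0) - p.1 := by linarith
    obtain ⟨n, hn⟩ := exists_nat_gt ((C * Real.log 2) / (-(C * max p.2 0) - p.1))
    have hn0 : 0 < (n:ℝ) := lt_of_le_of_lt (by positivity) hn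
    have hmem : (n : ℕ) • p ∈ G := AddSubgroup.nsmul_mem G hp n
    have h2 := hG _ hmem
    have e1 : ((n:ℕ) • p).1 = (n:ℝ) * p.1 := by rw [Prod.smul_fst, nsmul_eq_mul]
    have e2 : ((n:ℕ) • p).2 = (n:ℝ) * p.2 := by rw [Prod.smul_snd, nsmul_eq_mul]
    rw [e1, e2] at h2
    have h3 := hlog ((n:ℝ) * p.2)
    have hmax : max ((n:ℝ) * p.2) 0 = (n:ℝ) * max p.2 0 := by
      rw [mul_max_of_nonneg _ _ (le_of_lt hn0), mul_zero]
    rw [hmax] at h3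
    have hm := mul_le_mul_of_nonneg_left h3 (le_of_lt hC)
    have h4 : (n:ℝ) * p.1 ≥ -C * (Real.log 2 + (n:ℝ) * max p.2 0) := by nlinarith
    have h5 : (n:ℝ) * (-(C * max p.2 0) - p.1) ≤ C * Real.log 2 := by nlinarith
    have h6 : (C * Real.log 2) / (-(C * max p.2 0) - p.1) < (n:ℝ) := hn
    rw [div_lt_iff₀ hd] at h6
    nlinarith
  -- absolute value bound
  have habs : ∀ p ∈ G, |p.1| ≤ C * |p.2| := by
    intro p hp
    have h1 := hside p hp
    have h2 := hside (-p) (neg_mem hp)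
    simp only [Prod.fst_neg, Prod.snd_neg] at h2
    rw [abs_le]
    constructor
    · have : max p.2 0 ≤ |p.2| := max_le (le_abs_self _) (abs_nonneg _)
      nlinarith
    · have : max (-p.2) 0 ≤ |p.2| := max_le (by rw [abs_eq_max_neg]; exact le_max_right _ _) (abs_nonneg _)
      nlinarith
  by_cases hz : ∀ p ∈ G, p.2 = 0
  · refine ⟨(1, 0), by simp [Prod.ext_iff], ?_⟩
    intro p hp
    exact ⟨p.1, by ext <;> simp [hz p hp]⟩
  · push_neg at hz
    obtain ⟨p₀, hp₀G, hp₀⟩ := hz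
    refine ⟨p₀, fun h => hp₀ (by simp [h]), ?_⟩
    intro q hq
    refine ⟨q.2 / p₀.2, ?_⟩
    have hsnd : q.2 = (q.2 / p₀.2) * p₀.2 := by field_simp
    have hfst : q.1 = (q.2 / p₀.2) * p₀.1 := by
      set δ : ℝ := q.1 - (q.2 / p₀.2) * p₀.1 with hδdef
      have key : ∀ n : ℕ, (n:ℝ) * |δ| ≤ C * |p₀.2| + |p₀.1| := by
        intro n
        set x : ℝ := ((n:ℝ) * q.2) / p₀.2 with hxdef
        set m : ℤ := ⌊x⌋ with hmdef
        have hrmem : (n : ℤ) • q - m • p₀ ∈ G :=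
          sub_mem (zsmul_mem hq _) (zsmul_mem hp₀G _)
        have hreq : ((n : ℤ) • q - m • p₀ : ℝ × ℝ) =
            ((n:ℝ) * q.1 - (m:ℝ) * p₀.1, (n:ℝ) * q.2 - (m:ℝ) * p₀.2) := by
          rw [Prod.ext_iff]
          simp only [Prod.fst_sub, Prod.snd_sub, Prod.smul_fst, Prod.smul_snd]
          constructor <;> (rw [zsmul_eq_mul, zsmul_eq_mul]; push_cast; ring)
        rw [hreq] at hrmem
        have hb := habs _ hrmem
        have hxb : (n:ℝ) * q.2 = x * p₀.2 := by
          rw [hxdef, div_mul_cancel₀ _ hp₀]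
        have hsnd2 : (n:ℝ) * q.2 - (m:ℝ) * p₀.2 = Int.fract x * p₀.2 := by
          rw [Int.fract]; rw [hxb]; ring
        have hfst2 : (n:ℝ) * q.1 - (m:ℝ) * p₀.1 = (n:ℝ) * δ + Int.fract x * p₀.1 := by
          rw [Int.fract, hδdef]
          have : (n:ℝ) * ((q.2 / p₀.2) * p₀.1) = x * p₀.1 := by
            rw [hxdef]; ring
          nlinarith [this]
        rw [hsnd2, hfst2] at hb
        have hf0 : 0 ≤ Int.fract x := Int.fract_nonneg x
        have hf1 : Int.fract x ≤ 1 := le_of_lt (Int.fract_lt_one x)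
        have h1 : |(n:ℝ) * δ| ≤ |(n:ℝ) * δ + Int.fract x * p₀.1| + Int.fract x * |p₀.1| := by
          have ha : |Int.fract x * p₀.1| = Int.fract x * |p₀.1| := by
            rw [abs_mul, abs_of_nonneg hf0]
          calc |(n:ℝ) * δ| = |((n:ℝ) * δ + Int.fract x * p₀.1) - Int.fract x * p₀.1| := by
                congr 1; ring
            _ ≤ |(n:ℝ) * δ + Int.fract x * p₀.1| + |Int.fract x * p₀.1| := abs_sub _ _
            _ = |(n:ℝ) * δ + Int.fract x * p₀.1| + Int.fract x * |p₀.1| := by rw [ha]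
        have h2 : |Int.fract x * p₀.2| ≤ |p₀.2| := by
          rw [abs_mul, abs_of_nonneg hf0]
          nlinarith [abs_nonneg p₀.2]
        have h3 : |(n:ℝ)| * |δ| = |(n:ℝ) * δ| := (abs_mul _ _).symm
        have hn : |(n:ℝ)| = (n:ℝ) := abs_of_nonneg (by positivity)
        have h4 : C * |Int.fract x * p₀.2| ≤ C * |p₀.2| :=
          mul_le_mul_of_nonneg_left h2 (le_of_lt hC)
        have h5 : Int.fract x * |p₀.1| ≤ |p₀.1| := by
          nlinarith [abs_nonneg p₀.1]
        rw [hn] at h3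
        linarith [h1, hb, h4, h5, h3]
      by_contra hδ
      have hδ0 : 0 < |δ| := abs_pos.2 (sub_ne_zero.mpr hδ)
      obtain ⟨n, hn⟩ := exists_nat_gt ((C * |p₀.2| + |p₀.1|) / |δ|)
      have := key n
      rw [div_lt_iff₀ hδ0] at hn
      nlinarith
    ext
    · exact hfst
    · exact hsnd
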